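/- Let A be a C*-algebra with a positive element s of norm 1 such that sA is dense in A (a strictly positive element). Then the sequence (f_n(s))_{n≥1}, where f_n is the piecewise-linear function as above applied via continuous functional calculus, is an approximate unit for A satisfying f_{n+1}(s) f_n(s) = f_n(s) for all n. -/

import Mathlib

/-!
On the quasispectrum of `s`, which lies in `[0, 1]`, the functions satisfy `f_{n+1} f_n = f_n`
and `|t f_n(t) - t| ≤ 1/n`, so `f_n(s) s → s` in norm. Since every `f_n(s)` is a contraction,
the maps `a ↦ f_n(s) a` are equi-Lipschitz, hence the set of `a` with `f_n(s) a → a` is closed;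
it contains the dense set `sA`, so it is all of `A`. Convergence on the right follows by taking
adjoints.
-/

/-- The piecewise-linear function `f_n`. -/
noncomputable def pwf (n : ℕ) (t : ℝ) : ℝ :=
  if t ≤ 1 / ((n : ℝ) + 1) then 0
  else if t ≤ 1 / (n : ℝ) then (n : ℝ) * ((n : ℝ) + 1) * t - (n : ℝ)
  else 1

open Filter Topology Set

theorem tendsto_mul_left_of_dense_range_mul {R ι : Type*} [NonUnitalSeminormedRing R]
    {l : Filter ι} {e : ι → R} {s : R} (he : ∀ i, ‖e i‖ ≤ 1)
    (hdense : Dense (range (s * ·))) (hs : Tendsto (fun i => e i * s) l (𝓝 s)) (a : R) :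
    Tendsto (fun i => e i * a) l (𝓝 a) := by
  have hlip : ∀ i, LipschitzWith 1 (e i * ·) := fun i =>
    LipschitzWith.of_dist_le_mul fun x y => by
      simpa [dist_eq_norm, ← mul_sub] using
        (norm_mul_le (e i) (x - y)).trans (mul_le_mul_of_nonneg_right (he i) (norm_nonneg _))
  have hclosed : IsClosed {a | Tendsto (fun i => e i * a) l (𝓝 a)} :=
    (LipschitzWith.uniformEquicontinuous _ 1 hlip).equicontinuous.isClosed_setOfPred_tendsto
      continuous_id
  refine hclosed.closure_subset_iff.2 ?_ (hdense a)
  rintro _ ⟨b, rfl⟩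
  simpa only [mul_assoc, mem_ofPred_eq] using hs.mul_const b

theorem tendsto_mul_right_of_forall_tendsto_mul_left {R ι : Type*} [Mul R] [StarMul R]
    [TopologicalSpace R] [ContinuousStar R] {l : Filter ι} {e : ι → R}
    (he : ∀ i, IsSelfAdjoint (e i)) (h : ∀ a, Tendsto (fun i => e i * a) l (𝓝 a)) (a : R) :
    Tendsto (fun i => a * e i) l (𝓝 a) := by
  simpa [star_mul, (he _).star_eq] using (h (star a)).star

theorem pwf_eq_max_min {n : ℕ} (hn : 1 ≤ n) :
    pwf n = fun t => max 0 (min 1 ((n : ℝ) * (n + 1) * t - n)) := by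
  have hN : (1 : ℝ) ≤ n := by exact_mod_cast hn
  funext t
  unfold pwf
  split_ifs with h₁ h₂
  · have : t * (n + 1) ≤ 1 := (le_div_iff₀ (by linarith)).mp h₁
    exact (max_eq_left ((min_le_right _ _).trans (by nlinarith))).symm
  · have h₁' : 1 < t * (n + 1) := (div_lt_iff₀ (by linarith)).mp (not_le.mp h₁)
    have h₂' : t * n ≤ 1 := (le_div_iff₀ (by linarith)).mp h₂
    rw [min_eq_right (by nlinarith), max_eq_right (by nlinarith)]
  · have : 1 < t * n := (div_lt_iff₀ (by linarith)).mp (not_le.mp h₂)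
    rw [min_eq_left (by nlinarith), max_eq_right zero_le_one]

theorem continuous_pwf {n : ℕ} (hn : 1 ≤ n) : Continuous (pwf n) := by
  rw [pwf_eq_max_min hn]
  fun_prop

theorem pwf_eq_zero_of_le {n : ℕ} {t : ℝ} (h : t ≤ 1 / ((n : ℝ) + 1)) : pwf n t = 0 :=
  if_pos h

theorem pwf_apply_zero (n : ℕ) : pwf n 0 = 0 :=
  pwf_eq_zero_of_le (by positivity)

theorem pwf_eq_one_of_lt {n : ℕ} {t : ℝ} (hn : 1 ≤ n) (h : 1 / (n : ℝ) < t) : pwf n t = 1 := by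
  have h' : 1 / ((n : ℝ) + 1) < t :=
    lt_of_le_of_lt (one_div_le_one_div_of_le (by exact_mod_cast hn) (by linarith)) h
  rw [pwf, if_neg h'.not_ge, if_neg h.not_ge]

theorem pwf_mem_Icc (n : ℕ) (t : ℝ) : pwf n t ∈ Icc (0 : ℝ) 1 := by
  rcases Nat.eq_zero_or_pos n with rfl | hn
  · unfold pwf
    split_ifs <;> norm_num
  · rw [pwf_eq_max_min hn]
    exact ⟨le_max_left _ _, max_le zero_le_one (min_le_left _ _)⟩

/-- Since `1 / 0 = 0` in `ℝ`, `pwf 0` is the indicator of `(1, ∞)`, continuous only on `Iic 1`. -/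
theorem continuousOn_pwf_Iic (n : ℕ) : ContinuousOn (pwf n) (Iic 1) := by
  rcases Nat.eq_zero_or_pos n with rfl | hn
  · exact continuousOn_const.congr fun t ht => pwf_eq_zero_of_le (by simpa using ht)
  · exact (continuous_pwf hn).continuousOn

theorem pwf_succ_mul_self (n : ℕ) (t : ℝ) : pwf (n + 1) t * pwf n t = pwf n t := by
  by_cases h : t ≤ 1 / ((n : ℝ) + 1)
  · rw [pwf_eq_zero_of_le h, mul_zero]
  · rw [pwf_eq_one_of_lt (by omega) (by push_cast; linarith), one_mul]

theorem abs_pwf_mul_sub_le {n : ℕ} {t : ℝ} (hn : 1 ≤ n) (ht : 0 ≤ t) :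
    |pwf n t * t - t| ≤ 1 / n := by
  rcases le_or_gt t (1 / n) with h | h
  · have := pwf_mem_Icc n t
    rw [abs_le]
    constructor <;> nlinarith [this.1, this.2]
  · rw [pwf_eq_one_of_lt hn h, one_mul, sub_self, abs_zero]
    positivity

section CStarAlgebra

variable {A : Type*} [NonUnitalCStarAlgebra A] {s : A}

open NonUnitalIsometricContinuousFunctionalCalculus in
theorem quasispectrum_subset_Iic_one (hs : IsSelfAdjoint s) (hs₁ : ‖s‖ ≤ 1) :
    quasispectrum ℝ s ⊆ Iic 1 := fun x hx =>
  (le_abs_self x).trans ((norm_quasispectrum_le s hx).trans hs₁)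

theorem cfcₙ_pwf_succ_mul_self (hs : IsSelfAdjoint s) (hs₁ : ‖s‖ ≤ 1) (n : ℕ) :
    cfcₙ (pwf (n + 1)) s * cfcₙ (pwf n) s = cfcₙ (pwf n) s := by
  have hσ := quasispectrum_subset_Iic_one hs hs₁
  rw [← cfcₙ_mul _ _ s ((continuousOn_pwf_Iic _).mono hσ) (pwf_apply_zero _)
    ((continuousOn_pwf_Iic _).mono hσ) (pwf_apply_zero _)]
  exact cfcₙ_congr fun t _ => pwf_succ_mul_self n t

variable [PartialOrder A] [StarOrderedRing A]

theorem norm_cfcₙ_pwf_mul_sub_le (hs : 0 ≤ s) {n : ℕ} (hn : 1 ≤ n) :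
    ‖cfcₙ (pwf n) s * s - s‖ ≤ 1 / n := by
  -- side conditions of `cfcₙ_sub` and `cfcₙ_mul`, found by `cfc_cont_tac` and `cfc_zero_tac`
  have hcont := (continuous_pwf hn).continuousOn (s := quasispectrum ℝ s)
  have h₀ := pwf_apply_zero n
  have : cfcₙ (pwf n) s * s - s = cfcₙ (fun t => pwf n t * t - t) s := by
    rw [cfcₙ_sub _ _ s, cfcₙ_mul _ _ s, cfcₙ_id' ℝ s]
  rw [this]
  exact norm_cfcₙ_le fun t ht => abs_pwf_mul_sub_le hn (quasispectrum_nonneg_of_nonneg s hs t ht)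

theorem tendsto_cfcₙ_pwf_mul_self (hs : 0 ≤ s) :
    Tendsto (fun n : ℕ => cfcₙ (pwf n) s * s) atTop (𝓝 s) := by
  rw [tendsto_iff_norm_sub_tendsto_zero]
  exact squeeze_zero' (.of_forall fun n => norm_nonneg _)
    (eventually_atTop.2 ⟨1, fun n hn => norm_cfcₙ_pwf_mul_sub_le hs hn⟩)
    tendsto_one_div_atTop_nhds_zero_nat

end CStarAlgebra

/-- If `s` is a strictly positive element of norm one in a C*-algebra `A`, then
`(f_n(s))_{n ≥ 1}` is an approximate unit for `A` with `f_{n+1}(s) f_n(s) = f_n(s)`. -/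
theorem stmt1 {A : Type*} [NonUnitalCStarAlgebra A] [PartialOrder A] [StarOrderedRing A]
    (s : A) (hs : 0 ≤ s) (hnorm : ‖s‖ = 1)
    (hdense : Dense (Set.range fun a : A => s * a)) :
    (∀ n : ℕ, 1 ≤ n → 0 ≤ cfcₙ (pwf n) s ∧ ‖cfcₙ (pwf n) s‖ ≤ 1) ∧
    (∀ a : A, Filter.Tendsto (fun n : ℕ => cfcₙ (pwf n) s * a) Filter.atTop (nhds a)) ∧
    (∀ a : A, Filter.Tendsto (fun n : ℕ => a * cfcₙ (pwf n) s) Filter.atTop (nhds a)) ∧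
    (∀ n : ℕ, cfcₙ (pwf (n + 1)) s * cfcₙ (pwf n) s = cfcₙ (pwf n) s) := by
  have hnonneg (n : ℕ) : 0 ≤ cfcₙ (pwf n) s := cfcₙ_nonneg fun t _ => (pwf_mem_Icc n t).1
  have hnorm_le (n : ℕ) : ‖cfcₙ (pwf n) s‖ ≤ 1 :=
    norm_cfcₙ_le fun t _ => abs_le.2 ⟨by linarith [(pwf_mem_Icc n t).1], (pwf_mem_Icc n t).2⟩
  have hleft := tendsto_mul_left_of_dense_range_mul hnorm_le hdense (tendsto_cfcₙ_pwf_mul_self hs)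
  exact ⟨fun n _ => ⟨hnonneg n, hnorm_le n⟩, hleft,
    tendsto_mul_right_of_forall_tendsto_mul_left (fun n => (hnonneg n).isSelfAdjoint) hleft,
    cfcₙ_pwf_succ_mul_self hs.isSelfAdjoint hnorm.le⟩
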